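/- Let t ≥ 1 and let w_1, …, w_t and w'_1, …, w'_t be strings over {1,2}. Then the string w_1 0 w_2 0 ⋯ 0 w_t 3 w'_t 0 ⋯ 0 w'_2 0 w'_1 belongs to MANYTWINS if and only if e(w_i) = e(w'_i) for every i with 1 ≤ i ≤ t. -/

import Mathlib

/-- `joinZero [w₁, …, w_t] = w₁ 0 w₂ 0 ⋯ 0 w_t`: concatenation with the
separator symbol `0` in between. -/
def joinZero : List (List (Fin 4)) → List (Fin 4)
  | [] => []
  | [w] => w
  | w :: ws => w ++ [0] ++ joinZero ws

/-- `TWIN(t) = { w₁ 0 w₂ 0 ⋯ 0 w_t 3 w_t 0 ⋯ 0 w₂ 0 w₁ : wᵢ ∈ {1,2}^* }`. -/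
def TWIN (t : ℕ) : Set (List (Fin 4)) :=
  {s | ∃ ws : List (List (Fin 4)), ws.length = t ∧
        (∀ w ∈ ws, ∀ a ∈ w, a = 1 ∨ a = 2) ∧
        s = joinZero ws ++ [3] ++ joinZero ws.reverse}

/-- `MANYTWINS = ⋃_{t ≥ 1} TWIN(t)`. -/
def MANYTWINS : Set (List (Fin 4)) :=
  {s | ∃ t : ℕ, 1 ≤ t ∧ s ∈ TWIN t}

/-- Base-3 encoding of a string over `{1,2}` (given as a string over `{0,1,2,3}`
whose symbols are `1` or `2`): `e(ε) = 0` and `e(u·d) = 3·e(u) + d`. -/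
def enc (u : List (Fin 4)) : ℕ :=
  u.foldl (fun acc d => 3 * acc + d.val) 0

/-!
The symbol `3` occurs exactly once in `w₁ 0 ⋯ 0 w_t 3 w'_t 0 ⋯ 0 w'₁`, so a twin decomposition
`u₁ 0 ⋯ 0 u_s 3 u_s 0 ⋯ 0 u₁` of it must agree with it on both sides of the `3`. Since `0` does not
occur in words over `{1,2}`, splitting at `0` recovers the words, so membership in `MANYTWINS`
means `wᵢ = w'ᵢ` for all `i`. Finally `e` is injective on `{1,2}^*`: it is bijective base-3
numeration, and the last digit `d ∈ {1,2}` of `u·d` is determined by `e(u·d) = 3·e(u) + d`.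
-/

theorem joinZero_eq_intercalate (ws : List (List (Fin 4))) :
    joinZero ws = [0].intercalate ws := by
  fun_induction joinZero ws with
  | case1 => rfl
  | case2 w => exact List.intercalate_singleton.symm
  | case3 w ws hne ih =>
    obtain ⟨x, xs, rfl⟩ := List.exists_cons_of_ne_nil hne
    rw [ih, List.intercalate_cons_cons, List.append_assoc]

theorem eq_of_joinZero_eq {ws us : List (List (Fin 4))} (hne : ws ≠ []) (hne' : us ≠ [])
    (hws : ∀ w ∈ ws, (0 : Fin 4) ∉ w) (hus : ∀ w ∈ us, (0 : Fin 4) ∉ w)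
    (h : joinZero ws = joinZero us) : ws = us := by
  rw [joinZero_eq_intercalate, joinZero_eq_intercalate] at h
  rw [← List.splitOn_intercalate 0 hws hne, h, List.splitOn_intercalate 0 hus hne']

theorem three_not_mem_joinZero {ws : List (List (Fin 4))} (hws : ∀ w ∈ ws, (3 : Fin 4) ∉ w) :
    (3 : Fin 4) ∉ joinZero ws := by
  fun_induction joinZero ws with
  | case1 => simp
  | case2 w => exact hws w (by simp)
  | case3 w ws _ ih =>
    simp only [List.append_assoc, List.singleton_append, List.mem_append, List.mem_cons, not_or]
    exact ⟨hws w (by simp), by decide, ih fun v hv => hws v (by simp [hv])⟩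

theorem joinZero_three_joinZero_reverse_mem_MANYTWINS_iff {ws ws' : List (List (Fin 4))}
    (hne : ws ≠ []) (hne' : ws' ≠ [])
    (hws : ∀ w ∈ ws, ∀ a ∈ w, a = 1 ∨ a = 2) (hws' : ∀ w ∈ ws', ∀ a ∈ w, a = 1 ∨ a = 2) :
    joinZero ws ++ [3] ++ joinZero ws'.reverse ∈ MANYTWINS ↔ ws = ws' := by
  have avoids {vs : List (List (Fin 4))} (hvs : ∀ w ∈ vs, ∀ a ∈ w, a = 1 ∨ a = 2) (b : Fin 4)
      (hb₁ : b ≠ 1) (hb₂ : b ≠ 2) : ∀ w ∈ vs, b ∉ w :=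
    fun w hw hbw => (hvs w hw b hbw).elim hb₁ hb₂
  constructor
  · rintro ⟨t, ht, us, rfl, hus, heq⟩
    have hus_ne : us ≠ [] := List.ne_nil_of_length_pos ht
    replace hws' : ∀ w ∈ ws'.reverse, ∀ a ∈ w, a = 1 ∨ a = 2 := by simpa using hws'
    have hus_rev : ∀ w ∈ us.reverse, ∀ a ∈ w, a = 1 ∨ a = 2 := by simpa using hus
    simp only [List.append_assoc, List.singleton_append] at heq
    obtain ⟨hleft, -, hright⟩ := (List.append_cons_inj_of_notMem
      (three_not_mem_joinZero (avoids hws 3 (by decide) (by decide)))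
      (three_not_mem_joinZero (avoids hws' 3 (by decide) (by decide)))).1 heq
    have hws_us : ws = us := eq_of_joinZero_eq hne hus_ne
      (avoids hws 0 (by decide) (by decide)) (avoids hus 0 (by decide) (by decide)) hleft
    have hws'_us : ws'.reverse = us.reverse :=
      eq_of_joinZero_eq (by simpa using hne') (by simpa using hus_ne)
        (avoids hws' 0 (by decide) (by decide)) (avoids hus_rev 0 (by decide) (by decide)) hright
    rw [hws_us, List.reverse_injective hws'_us]
  · rintro rfl
    exact ⟨ws.length, List.length_pos_of_ne_nil hne, ws, rfl, hws, rfl⟩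

theorem enc_nil : enc [] = 0 := rfl

theorem enc_append_singleton (u : List (Fin 4)) (d : Fin 4) :
    enc (u ++ [d]) = 3 * enc u + d.val := by
  simp [enc, List.foldl_append]

theorem enc_injOn : Set.InjOn enc {u | ∀ a ∈ u, a = 1 ∨ a = 2} := by
  have digit_val {d : Fin 4} (h : d = 1 ∨ d = 2) : d.val = 1 ∨ d.val = 2 := by
    rcases h with rfl | rfl <;> simp
  intro u hu v hv huv
  induction u using List.reverseRecOn generalizing v with
  | nil =>
    obtain rfl | ⟨v, e, rfl⟩ := v.eq_nil_or_concat'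
    · rfl
    · have he := digit_val (hv e (by simp))
      rw [enc_nil, enc_append_singleton] at huv
      omega
  | append_singleton u d ih =>
    have hd := digit_val (hu d (by simp))
    obtain rfl | ⟨v, e, rfl⟩ := v.eq_nil_or_concat'
    · rw [enc_nil, enc_append_singleton] at huv
      omega
    · have he := digit_val (hv e (by simp))
      rw [enc_append_singleton, enc_append_singleton] at huv
      have hinit : u = v :=
        ih (fun a ha => hu a (by simp [ha])) (fun a ha => hv a (by simp [ha])) (by omega)
      rw [hinit, Fin.ext (by omega : d.val = e.val)]

theorem eq_iff_forall_enc_getD_eq {ws ws' : List (List (Fin 4))} (hlen : ws.length = ws'.length)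
    (hws : ∀ w ∈ ws, ∀ a ∈ w, a = 1 ∨ a = 2) (hws' : ∀ w ∈ ws', ∀ a ∈ w, a = 1 ∨ a = 2) :
    ws = ws' ↔ ∀ i < ws.length, enc (ws.getD i []) = enc (ws'.getD i []) := by
  refine ⟨by rintro rfl _ _; rfl, fun h => List.ext_getElem hlen fun i hi hi' => ?_⟩
  have hi_enc := h i hi
  rw [List.getD_eq_getElem ws [] hi, List.getD_eq_getElem ws' [] hi'] at hi_enc
  exact enc_injOn (hws _ (List.getElem_mem hi)) (hws' _ (List.getElem_mem hi')) hi_enc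

theorem stmt_16 (t : ℕ) (ht : 1 ≤ t)
    (ws ws' : List (List (Fin 4)))
    (hlen : ws.length = t) (hlen' : ws'.length = t)
    (hws : ∀ w ∈ ws, ∀ a ∈ w, a = 1 ∨ a = 2)
    (hws' : ∀ w ∈ ws', ∀ a ∈ w, a = 1 ∨ a = 2) :
    (joinZero ws ++ [3] ++ joinZero ws'.reverse) ∈ MANYTWINS ↔
      ∀ i < t, enc (ws.getD i []) = enc (ws'.getD i []) := by
  subst hlen
  rw [joinZero_three_joinZero_reverse_mem_MANYTWINS_iff (List.ne_nil_of_length_pos ht)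
    (List.ne_nil_of_length_pos (by omega)) hws hws']
  exact eq_iff_forall_enc_getD_eq hlen'.symm hws hws'
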